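/- arXiv:2512.18625 — 3 statements merged into one kernel-verified Lean document; each statement's English description precedes it below -/
import Mathlib

section
/- In the Kovalevskaya case I = diag(2,2,1) and μ = (x₀,0,0) with x₀ ∈ ℝ, writing Ω(t) = I⁻¹M(t) = (p(t),q(t),r(t)), the quartic Kovalevskaya integral K(t) = ( p(t)² − q(t)² + x₀·Γ₁(t) )² + ( 2·p(t)·q(t) + x₀·Γ₂(t) )² is constant along every solution of the Euler–Poisson equations. -/
open Matrix

noncomputable section

/-- Componentwise action of the diagonal inertia tensor `I = diag(I₁,I₂,I₃)` on `ℝ³`. -/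
def inertiaAct (I1 I2 I3 : ℝ) (v : Fin 3 → ℝ) : Fin 3 → ℝ :=
  ![I1 * v 0, I2 * v 1, I3 * v 2]

/-- Componentwise action of the inverse inertia tensor `I⁻¹ = diag(I₁⁻¹,I₂⁻¹,I₃⁻¹)` on `ℝ³`. -/
def inertiaInv (I1 I2 I3 : ℝ) (v : Fin 3 → ℝ) : Fin 3 → ℝ :=
  ![v 0 / I1, v 1 / I2, v 2 / I3]

/-- The inertial curvature field `K_geo(Ω) = I⁻¹((IΩ) × Ω)`. -/
def Kgeo (I1 I2 I3 : ℝ) (Ω : Fin 3 → ℝ) : Fin 3 → ℝ :=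
  inertiaInv I1 I2 I3 (crossProduct (inertiaAct I1 I2 I3 Ω) Ω)

/-- `(M, Γ)` is a solution of the Euler–Poisson equations of the heavy top with
inertia tensor `diag(I₁,I₂,I₃)` and centre-of-mass vector `μ`:
`Ṁ = M × Ω + μ × Γ`, `Γ̇ = Γ × Ω`, where `Ω = I⁻¹M`. -/
def IsEulerPoissonSolution (I1 I2 I3 : ℝ) (μ : Fin 3 → ℝ) (M Γ : ℝ → Fin 3 → ℝ) : Prop :=
  ∀ t : ℝ,
    HasDerivAt M
      (crossProduct (M t) (inertiaInv I1 I2 I3 (M t)) + crossProduct μ (Γ t)) t ∧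
    HasDerivAt Γ (crossProduct (Γ t) (inertiaInv I1 I2 I3 (M t))) t

theorem kovalevskaya_integral_constant (x0 : ℝ) (M Γ : ℝ → Fin 3 → ℝ)
    (hsol : IsEulerPoissonSolution 2 2 1 ![x0, 0, 0] M Γ) :
    ∀ t s : ℝ,
      ((inertiaInv 2 2 1 (M t) 0) ^ 2 - (inertiaInv 2 2 1 (M t) 1) ^ 2 + x0 * Γ t 0) ^ 2 +
          (2 * (inertiaInv 2 2 1 (M t) 0) * (inertiaInv 2 2 1 (M t) 1) + x0 * Γ t 1) ^ 2 =
        ((inertiaInv 2 2 1 (M s) 0) ^ 2 - (inertiaInv 2 2 1 (M s) 1) ^ 2 + x0 * Γ s 0) ^ 2 +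
          (2 * (inertiaInv 2 2 1 (M s) 0) * (inertiaInv 2 2 1 (M s) 1) + x0 * Γ s 1) ^ 2 := by
  have key : ∀ t : ℝ, HasDerivAt (fun t =>
      ((M t 0 / 2) ^ 2 - (M t 1 / 2) ^ 2 + x0 * Γ t 0) ^ 2 +
        (2 * (M t 0 / 2) * (M t 1 / 2) + x0 * Γ t 1) ^ 2) 0 t := by
    intro t
    obtain ⟨hM, hΓ⟩ := hsol t
    rw [hasDerivAt_pi] at hM hΓ
    have hM0 := hM 0
    have hM1 := hM 1
    have hG0 := hΓ 0
    have hG1 := hΓ 1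
    simp only [Pi.add_apply, crossProduct, inertiaInv, LinearMap.mk₂_apply,
      Matrix.cons_val_zero, Matrix.cons_val_one, Matrix.head_cons,
      Matrix.cons_val_two, Matrix.tail_cons] at hM0 hM1 hG0 hG1
    have h := ((((hM0.div_const 2).pow 2).sub ((hM1.div_const 2).pow 2)).add
        (hG0.const_mul x0)).pow 2 |>.add
      (((((hM0.div_const 2).const_mul 2).mul (hM1.div_const 2)).add
        (hG1.const_mul x0)).pow 2)
    convert h using 1
    · rfl
    · rfl
    · funext x
      simp only [Pi.add_apply, Pi.pow_apply, Pi.sub_apply, Pi.mul_apply]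
    · simp only [Pi.add_apply, Pi.pow_apply, Pi.sub_apply, Pi.mul_apply]
      ring
  have hdiff : Differentiable ℝ (fun t =>
      ((M t 0 / 2) ^ 2 - (M t 1 / 2) ^ 2 + x0 * Γ t 0) ^ 2 +
        (2 * (M t 0 / 2) * (M t 1 / 2) + x0 * Γ t 1) ^ 2) :=
    fun t => (key t).differentiableAt
  have hconst := is_const_of_deriv_eq_zero hdiff (fun t => (key t).deriv)
  intro t s
  simpa only [inertiaInv, Matrix.cons_val_zero, Matrix.cons_val_one, Matrix.head_cons]
    using hconst t s
end
end

section
/- In the Goryachev–Chaplygin case I = diag(4,4,1) and μ = (x₀,0,0) with x₀ ∈ ℝ, writing Ω(t) = I⁻¹M(t) = (p(t),q(t),r(t)): if the initial data satisfy ⟨M(0), Γ(0)⟩ = 0, then the cubic Goryachev–Chaplygin integral G(t) = r(t)·( p(t)² + q(t)² ) + x₀·p(t)·Γ₃(t) is constant along every solution of the Euler–Poisson equations. -/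
open Matrix

noncomputable section

-- derivative of the Casimir M⬝Γ is zero
lemma casimir_deriv (x0 : ℝ) (M Γ : ℝ → Fin 3 → ℝ)
    (hsol : IsEulerPoissonSolution 4 4 1 ![x0, 0, 0] M Γ) (t : ℝ) :
    HasDerivAt (fun t => M t ⬝ᵥ Γ t) 0 t := by
  obtain ⟨hM, hΓ⟩ := hsol t
  have hMi := hasDerivAt_pi.mp hM
  have hΓi := hasDerivAt_pi.mp hΓ
  have key : HasDerivAt (fun t => M t 0 * Γ t 0 + M t 1 * Γ t 1 + M t 2 * Γ t 2)
      (((crossProduct (M t) (inertiaInv 4 4 1 (M t)) + crossProduct ![x0,0,0] (Γ t)) 0) * Γ t 0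
       + M t 0 * ((crossProduct (Γ t) (inertiaInv 4 4 1 (M t))) 0)
       + (((crossProduct (M t) (inertiaInv 4 4 1 (M t)) + crossProduct ![x0,0,0] (Γ t)) 1) * Γ t 1
       + M t 1 * ((crossProduct (Γ t) (inertiaInv 4 4 1 (M t))) 1))
       + (((crossProduct (M t) (inertiaInv 4 4 1 (M t)) + crossProduct ![x0,0,0] (Γ t)) 2) * Γ t 2
       + M t 2 * ((crossProduct (Γ t) (inertiaInv 4 4 1 (M t))) 2)) ) t := by
    exact (((hMi 0).mul (hΓi 0)).add ((hMi 1).mul (hΓi 1))).add ((hMi 2).mul (hΓi 2))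
  have : (fun t => M t ⬝ᵥ Γ t) = fun t => M t 0 * Γ t 0 + M t 1 * Γ t 1 + M t 2 * Γ t 2 := by
    funext t; simp [dotProduct, Fin.sum_univ_three]
  rw [this]
  convert key using 1
  simp [cross_apply, inertiaInv]
  ring

lemma casimir_zero (x0 : ℝ) (M Γ : ℝ → Fin 3 → ℝ)
    (hsol : IsEulerPoissonSolution 4 4 1 ![x0, 0, 0] M Γ)
    (hinit : M 0 ⬝ᵥ Γ 0 = 0) (t : ℝ) : M t ⬝ᵥ Γ t = 0 := by
  have h := casimir_deriv x0 M Γ hsol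
  have : (fun t => M t ⬝ᵥ Γ t) t = (fun t => M t ⬝ᵥ Γ t) 0 :=
    is_const_of_deriv_eq_zero (fun x => (h x).differentiableAt)
      (fun x => (h x).deriv) t 0
  simpa [hinit] using this

theorem goryachev_chaplygin_integral_constant (x0 : ℝ) (M Γ : ℝ → Fin 3 → ℝ)
    (hsol : IsEulerPoissonSolution 4 4 1 ![x0, 0, 0] M Γ)
    (hinit : M 0 ⬝ᵥ Γ 0 = 0) :
    ∀ t s : ℝ,
      (inertiaInv 4 4 1 (M t) 2) *
            ((inertiaInv 4 4 1 (M t) 0) ^ 2 + (inertiaInv 4 4 1 (M t) 1) ^ 2) +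
          x0 * (inertiaInv 4 4 1 (M t) 0) * Γ t 2 =
        (inertiaInv 4 4 1 (M s) 2) *
            ((inertiaInv 4 4 1 (M s) 0) ^ 2 + (inertiaInv 4 4 1 (M s) 1) ^ 2) +
          x0 * (inertiaInv 4 4 1 (M s) 0) * Γ s 2 := by
  have hG : ∀ t : ℝ, HasDerivAt (fun t =>
      (M t 2 / 1) * ((M t 0 / 4) ^ 2 + (M t 1 / 4) ^ 2) + x0 * (M t 0 / 4) * Γ t 2) 0 t := by
    intro t
    obtain ⟨hM, hΓ⟩ := hsol t
    have hMi := hasDerivAt_pi.mp hM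
    have hΓi := hasDerivAt_pi.mp hΓ
    have key := (((((hMi 2).div_const 1).mul
        ((((hMi 0).div_const 4).pow 2).add (((hMi 1).div_const 4).pow 2)))).add
        ((((hMi 0).div_const 4).const_mul x0).mul (hΓi 2)))
    convert key using 1
    · rfl
    · rfl
    · rfl
    have hc := casimir_zero x0 M Γ hsol hinit t
    simp [dotProduct, Fin.sum_univ_three] at hc
    simp [cross_apply, inertiaInv]
    linear_combination (-x0 * M t 1 / 16) * hc
  intro t s
  have h := is_const_of_deriv_eq_zero (f := fun t =>
      (M t 2 / 1) * ((M t 0 / 4) ^ 2 + (M t 1 / 4) ^ 2) + x0 * (M t 0 / 4) * Γ t 2)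
      (fun x => (hG x).differentiableAt) (fun x => (hG x).deriv) t s
  simpa [inertiaInv] using h
end
end

section
/- For the balanced-mixed inertia tensor I = diag(2,2,1) and centre-of-mass vector μ = (0,0,μ₃) with μ₃ ≠ 0, the curvature-balance equation K_geo(Ω) + I⁻¹(μ × Γ) = 0 together with ‖Γ‖ = 1 admits a one-parameter family of solutions: for every γ₃ ∈ (−1,1), every ω₃ ≠ 0, and every φ ∈ ℝ, setting s = √(1−γ₃²), Γ = (s·cos φ, s·sin φ, γ₃) and Ω = ((μ₃ s/ω₃)·cos φ, (μ₃ s/ω₃)·sin φ, ω₃), one has ‖Γ‖ = 1 and K_geo(Ω) + I⁻¹(μ × Γ) = 0. -/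
open Matrix

noncomputable section

theorem balanced_mixed_curvature_balance_family (μ3 : ℝ) (hμ3 : μ3 ≠ 0)
    (γ3 : ℝ) (hγ3 : γ3 ∈ Set.Ioo (-1 : ℝ) 1) (ω3 : ℝ) (hω3 : ω3 ≠ 0) (φ : ℝ) :
    let s := Real.sqrt (1 - γ3 ^ 2)
    let Γ : Fin 3 → ℝ := ![s * Real.cos φ, s * Real.sin φ, γ3]
    let Ω : Fin 3 → ℝ := ![μ3 * s / ω3 * Real.cos φ, μ3 * s / ω3 * Real.sin φ, ω3]
    Real.sqrt (Γ ⬝ᵥ Γ) = 1 ∧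
      Kgeo 2 2 1 Ω + inertiaInv 2 2 1 (crossProduct ![0, 0, μ3] Γ) = 0 := by

  intro s Γ Ω
  have hs2 : s ^ 2 = 1 - γ3 ^ 2 := Real.sq_sqrt (by nlinarith [hγ3.1, hγ3.2])
  constructor
  · have : Γ ⬝ᵥ Γ = 1 := by
      simp [Γ, dotProduct, Fin.sum_univ_three]
      nlinarith [Real.sin_sq_add_cos_sq φ, hs2]
    rw [this, Real.sqrt_one]
  · funext i
    fin_cases i <;>
      simp [Kgeo, inertiaAct, inertiaInv, Ω, Γ, crossProduct] <;>
      field_simp <;> ring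
end
end
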